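/- Under the setup of the kernel argument, for every 2 ≤ i ≤ t one has |X_i| ≥ |X_1| + |X_2| + … + |X_{i-1}| + (i-1)(p+1), and consequently |X_i| ≥ (2^{i-1} - 1)(p+1) for all 1 ≤ i ≤ t. -/
import Mathlib

/-- The number of odd connected components of `G - X`. -/
noncomputable def oddCompCount {V : Type*} [DecidableEq V] (G : SimpleGraph V)
    (X : Finset V) : ℕ :=
  Nat.card {C : (G.induce {v : V | v ∉ X}).ConnectedComponent // Odd (Nat.card C.supp)}

open SimpleGraph Finset

section KernelAux

variable {n t : ℕ} (c : Fin n → Fin n → Fin t) (X : Fin t → Finset (Fin n))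

/-- Generic counting: pairwise-disjoint nonempty subsets of `Z` are at most `Z.ncard` many. -/
lemma aux_count {J : Type*} [Finite J] (Z : Set (Fin n)) (g : J → Set (Fin n))
    (hne : ∀ x, (g x).Nonempty) (hsub : ∀ x, g x ⊆ Z)
    (hdisj : ∀ x y a, a ∈ g x → a ∈ g y → x = y) :
    Nat.card J ≤ Z.ncard := by
  rw [← Nat.card_coe_set_eq]
  refine Nat.card_le_card_of_injective
    (fun x => ⟨(hne x).choose, hsub x (hne x).choose_spec⟩) ?_
  intro x y hxy
  refine hdisj x y (hne x).choose (hne x).choose_spec ?_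
  have : (hne x).choose = (hne y).choose := congrArg Subtype.val hxy
  rw [this]; exact (hne y).choose_spec

lemma aux_addone {J : Type*} [Finite J] (R P : J → Prop)
    (huniq : ∀ x y, R x → ¬ P x → R y → ¬ P y → x = y) :
    Nat.card {x // R x} ≤ Nat.card {x // R x ∧ P x} + 1 := by
  classical
  have F : Fintype {x // R x ∧ P x} := Fintype.ofFinite _
  have h1 : Nat.card {x // R x} ≤ Nat.card (Option {x // R x ∧ P x}) := by
    refine Nat.card_le_card_of_injective
      (fun x => if h : P x.1 then some ⟨x.1, x.2, h⟩ else none) ?_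
    rintro ⟨x, hx⟩ ⟨y, hy⟩ hxy
    dsimp only at hxy
    split_ifs at hxy <;>
      first
        | exact Subtype.ext (by simpa using hxy)
        | exact Subtype.ext (huniq x y hx (by assumption) hy (by assumption))
        | simp at hxy
  have h2 : Nat.card (Option {x // R x ∧ P x}) = Nat.card {x // R x ∧ P x} + 1 := by
    simp [Nat.card_eq_fintype_card]
  omega

lemma aux_addtwo {J : Type*} [Finite J] (R : J → Prop) (C C' : J) :
    Nat.card {x // R x} ≤ Nat.card {x // R x ∧ x ≠ C ∧ x ≠ C'} + 2 := by
  classical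
  have F : Fintype {x // R x ∧ x ≠ C ∧ x ≠ C'} := Fintype.ofFinite _
  have h1 : Nat.card {x // R x} ≤
      Nat.card (Option (Option {x // R x ∧ x ≠ C ∧ x ≠ C'})) := by
    refine Nat.card_le_card_of_injective (fun x =>
      if h : x.1 = C then none else if h' : x.1 = C' then some none
      else some (some ⟨x.1, x.2, h, h'⟩)) ?_
    rintro ⟨x, hx⟩ ⟨y, hy⟩ hxy
    dsimp only at hxy
    split_ifs at hxy <;> refine Subtype.ext ?_ <;> simp_all
  have h2 : Nat.card (Option (Option {x // R x ∧ x ≠ C ∧ x ≠ C'})) =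
      Nat.card {x // R x ∧ x ≠ C ∧ x ≠ C'} + 2 := by
    simp [Nat.card_eq_fintype_card]
  omega

/-- The graph of edges not colored `i`. -/
abbrev Gr (i : Fin t) : SimpleGraph (Fin n) := SimpleGraph.fromRel fun x y => c x y ≠ i

/-- `G_i - X_i`. -/
abbrev Hg (i : Fin t) : SimpleGraph {v : Fin n | v ∉ X i} :=
  (Gr c i).induce {v : Fin n | v ∉ X i}

/-- Support of a component, as a set of vertices of `K_n`. -/
def csupp {i : Fin t} (C : (Hg c X i).ConnectedComponent) : Set (Fin n) :=
  Subtype.val '' C.supp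

lemma mem_csupp {i : Fin t} {C : (Hg c X i).ConnectedComponent} {a : Fin n} :
    a ∈ csupp c X C ↔ ∃ h : a ∉ X i, (Hg c X i).connectedComponentMk ⟨a, h⟩ = C := by
  constructor
  · rintro ⟨u, hu, rfl⟩
    exact ⟨u.2, by rw [Subtype.coe_eta]; exact (C.mem_supp_iff u).mp hu⟩
  · rintro ⟨h, hmk⟩
    exact ⟨⟨a, h⟩, (C.mem_supp_iff _).mpr hmk, rfl⟩

lemma csupp_nonempty {i : Fin t} (C : (Hg c X i).ConnectedComponent) :
    (csupp c X C).Nonempty := by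
  obtain ⟨u, hu⟩ := C.exists_rep
  exact ⟨u.1, (mem_csupp c X).mpr ⟨u.2, by rw [Subtype.coe_eta]; exact hu⟩⟩

lemma csupp_notMem {i : Fin t} {C : (Hg c X i).ConnectedComponent} {a : Fin n}
    (ha : a ∈ csupp c X C) : a ∉ X i :=
  ((mem_csupp c X).mp ha).choose

lemma csupp_disjoint {i : Fin t} {C C' : (Hg c X i).ConnectedComponent} {a : Fin n}
    (ha : a ∈ csupp c X C) (ha' : a ∈ csupp c X C') : C = C' := by
  obtain ⟨h1, hm1⟩ := (mem_csupp c X).mp ha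
  obtain ⟨h2, hm2⟩ := (mem_csupp c X).mp ha'
  rw [← hm1, ← hm2]

lemma hg_adj (hc : ∀ x y, c x y = c y x) {i : Fin t} {u v : {v : Fin n | v ∉ X i}}
    (hne : (u : Fin n) ≠ v) (hcol : c u v ≠ i) : (Hg c X i).Adj u v := by
  show (Gr c i).Adj u v
  rw [SimpleGraph.fromRel_adj]
  exact ⟨hne, Or.inl hcol⟩

lemma cross (hc : ∀ x y, c x y = c y x) {i : Fin t} {u v : {v : Fin n | v ∉ X i}}
    (hmk : (Hg c X i).connectedComponentMk u ≠ (Hg c X i).connectedComponentMk v) :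
    c u v = i := by
  by_contra h
  have hne : (u : Fin n) ≠ v := by
    intro hval
    exact hmk (by rw [Subtype.ext hval])
  exact hmk (ConnectedComponent.connectedComponentMk_eq_of_adj (hg_adj c X hc hne h))

/-- number of odd components of `G_i - X_i` -/
noncomputable def oddN (i : Fin t) : ℕ :=
  Nat.card {C : (Hg c X i).ConnectedComponent // Odd (Nat.card C.supp)}

/-- at most `|X i|` odd components have support inside `X i`-avoiding... generic: components
with `csupp ⊆ Z` are at most `Z.ncard`. -/
lemma comp_count_le {i : Fin t} (R : (Hg c X i).ConnectedComponent → Prop)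
    (Z : Set (Fin n)) (hsub : ∀ C, R C → csupp c X C ⊆ Z) :
    Nat.card {C // R C} ≤ Z.ncard := by
  refine aux_count Z (fun C => csupp c X C.1) (fun C => csupp_nonempty c X C.1)
    (fun C => hsub C.1 C.2) ?_
  intro x y a hx hy
  exact Subtype.ext (csupp_disjoint c X hx hy)


/-- For `i ≠ j` with `|X i| ≤ |X j|`: at most one component of `G_i - X_i` escapes `X j`. -/
lemma escape_pair (hc : ∀ x y, c x y = c y x) {p : ℕ} {i j : Fin t}
    (hXj : (X j).card + p + 2 ≤ oddN c X j) (hij : i ≠ j)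
    (hcard : (X i).card ≤ (X j).card)
    {C C' : (Hg c X i).ConnectedComponent}
    (hC : ¬ csupp c X C ⊆ ↑(X j)) (hC' : ¬ csupp c X C' ⊆ ↑(X j)) : C = C' := by
  by_contra hne
  obtain ⟨a, haC, haj⟩ := Set.not_subset.mp hC
  obtain ⟨b, hbC', hbj⟩ := Set.not_subset.mp hC'
  rw [Finset.mem_coe] at haj hbj
  obtain ⟨hai, hamk⟩ := (mem_csupp c X).mp haC
  obtain ⟨hbi, hbmk⟩ := (mem_csupp c X).mp hbC'
  have hab : a ≠ b := by
    rintro rfl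
    exact hne (by rw [← hamk, ← hbmk])
  have hcab : c a b = i := cross c X hc (u := ⟨a, hai⟩) (v := ⟨b, hbi⟩)
    (by rw [hamk, hbmk]; exact hne)
  -- the special component of `G_j - X_j`
  set cstar := (Hg c X j).connectedComponentMk ⟨a, haj⟩ with hcstar
  have hstar_b : (Hg c X j).connectedComponentMk ⟨b, hbj⟩ = cstar := by
    refine (ConnectedComponent.connectedComponentMk_eq_of_adj ?_).symm
    refine hg_adj c X hc hab ?_
    rw [hcab]; exact hij
  have hall : ∀ Q : (Hg c X j).ConnectedComponent, Q ≠ cstar → csupp c X Q ⊆ ↑(X i) := by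
    intro Q hQ q hq
    by_contra hqi
    rw [Finset.mem_coe] at hqi
    obtain ⟨hqj, hqmk⟩ := (mem_csupp c X).mp hq
    by_cases hqa : q = a
    · subst hqa
      exact hQ (by rw [← hqmk])
    by_cases hqb : q = b
    · subst hqb
      exact hQ (by rw [← hqmk, hstar_b])
    by_cases hE : (Hg c X i).connectedComponentMk ⟨q, hqi⟩ = C
    · -- compare with b, C'
      have hcqb : c q b = i := cross c X hc (u := ⟨q, hqi⟩) (v := ⟨b, hbi⟩)
        (by rw [hE, hbmk]; exact hne)
      have : (Hg c X j).Adj ⟨q, hqj⟩ ⟨b, hbj⟩ :=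
        hg_adj c X hc hqb (by rw [hcqb]; exact hij)
      exact hQ (by rw [← hqmk, ConnectedComponent.connectedComponentMk_eq_of_adj this,
        hstar_b])
    · have hcqa : c q a = i := cross c X hc (u := ⟨q, hqi⟩) (v := ⟨a, hai⟩)
        (by rw [hamk]; exact hE)
      have : (Hg c X j).Adj ⟨q, hqj⟩ ⟨a, haj⟩ :=
        hg_adj c X hc hqa (by rw [hcqa]; exact hij)
      exact hQ (by rw [← hqmk, ConnectedComponent.connectedComponentMk_eq_of_adj this])
  have h1 : oddN c X j ≤
      Nat.card {Q : (Hg c X j).ConnectedComponent //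
        Odd (Nat.card Q.supp) ∧ csupp c X Q ⊆ ↑(X i)} + 1 := by
    refine aux_addone _ _ ?_
    intro x y hx hPx hy hPy
    have hx' : x = cstar := by
      by_contra h; exact hPx (hall x h)
    have hy' : y = cstar := by
      by_contra h; exact hPy (hall y h)
    rw [hx', hy']
  have h2 : Nat.card {Q : (Hg c X j).ConnectedComponent //
      Odd (Nat.card Q.supp) ∧ csupp c X Q ⊆ ↑(X i)} ≤ (X i).card := by
    have := comp_count_le c X (i := j)
      (fun Q => Odd (Nat.card Q.supp) ∧ csupp c X Q ⊆ ↑(X i)) ↑(X i) (fun Q hQ => hQ.2)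
    rwa [Set.ncard_coe_finset] at this
  omega


/-- The key asymmetric inequality: if distinct components `C ≠ C'` of `G_i - X_i`
escape `X a` and `X b` respectively, then `|X b| + 2p + 2 ≤ |X a|`. -/
lemma cross_ineq (hc : ∀ x y, c x y = c y x) {p : ℕ} {i a b : Fin t}
    (hXNi : (X i).card + p + 2 ≤ oddN c X i)
    (hXNa : (X a).card + p + 2 ≤ oddN c X a)
    (hXNb : (X b).card + p + 2 ≤ oddN c X b)
    (hia : i ≠ a) (hib : i ≠ b)
    (hcarda : (X i).card ≤ (X a).card) (hcardb : (X i).card ≤ (X b).card)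
    {C C' : (Hg c X i).ConnectedComponent} (hCC' : C ≠ C')
    (hC : ¬ csupp c X C ⊆ ↑(X a)) (hC' : ¬ csupp c X C' ⊆ ↑(X b)) :
    (X b).card + 2 * p + 2 ≤ (X a).card := by
  have hallA : ∀ D : (Hg c X i).ConnectedComponent, D ≠ C → csupp c X D ⊆ ↑(X a) := by
    intro D hD
    by_contra h
    exact hD (escape_pair c X hc hXNa hia hcarda h hC)
  have hallB : ∀ D : (Hg c X i).ConnectedComponent, D ≠ C' → csupp c X D ⊆ ↑(X b) := by
    intro D hD
    by_contra h
    exact hD (escape_pair c X hc hXNb hib hcardb h hC')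
  have hC'subXa : csupp c X C' ⊆ ↑(X a) := hallA C' (Ne.symm hCC')
  -- chain 2: every component of `G_b - X_b` lives in `X i ∪ csupp C'`
  have hQsub : ∀ Q : (Hg c X b).ConnectedComponent,
      Odd (Nat.card Q.supp) → csupp c X Q ⊆ ↑(X i) ∪ csupp c X C' := by
    intro Q _ q hq
    have hqb : q ∉ X b := csupp_notMem c X hq
    by_cases hqi : q ∈ X i
    · exact Or.inl hqi
    · right
      by_cases hE : (Hg c X i).connectedComponentMk ⟨q, hqi⟩ = C'
      · exact (mem_csupp c X).mpr ⟨hqi, hE⟩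
      · exfalso
        have := hallB _ hE ((mem_csupp c X).mpr ⟨hqi, rfl⟩)
        rw [Finset.mem_coe] at this
        exact hqb this
  have count2 : oddN c X b ≤ (↑(X i) ∪ csupp c X C' : Set (Fin n)).ncard :=
    comp_count_le c X (i := b) (fun Q => Odd (Nat.card Q.supp)) _ hQsub
  have count2' : oddN c X b ≤ (X i).card + (csupp c X C').ncard := by
    calc oddN c X b ≤ (↑(X i) ∪ csupp c X C' : Set (Fin n)).ncard := count2
    _ ≤ (↑(X i) : Set (Fin n)).ncard + (csupp c X C').ncard := Set.ncard_union_le _ _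
    _ = (X i).card + (csupp c X C').ncard := by rw [Set.ncard_coe_finset]
  -- chain 1
  have count1 : Nat.card {D : (Hg c X i).ConnectedComponent //
      Odd (Nat.card D.supp) ∧ D ≠ C ∧ D ≠ C'} ≤
      ((↑(X a) : Set (Fin n)) \ csupp c X C').ncard := by
    refine comp_count_le c X (i := i) _ _ ?_
    rintro D ⟨_, hDC, hDC'⟩ q hq
    refine ⟨hallA D hDC hq, fun hq' => hDC' (csupp_disjoint c X hq hq')⟩
  have count1' : oddN c X i ≤ Nat.card {D : (Hg c X i).ConnectedComponent //
      Odd (Nat.card D.supp) ∧ D ≠ C ∧ D ≠ C'} + 2 :=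
    aux_addtwo _ C C'
  have hdiff : ((↑(X a) : Set (Fin n)) \ csupp c X C').ncard + (csupp c X C').ncard
      = (X a).card := by
    rw [Set.ncard_diff_add_ncard_of_subset hC'subXa, Set.ncard_coe_finset]
  omega

/-- Global uniqueness of the escaping component. -/
lemma escape_global (hc : ∀ x y, c x y = c y x) {p : ℕ}
    (hXN : ∀ i, (X i).card + p + 2 ≤ oddN c X i)
    (hmono : Monotone fun i => (X i).card) {i : Fin t}
    {C C' : (Hg c X i).ConnectedComponent}
    (hC : ∃ a, i < a ∧ ¬ csupp c X C ⊆ ↑(X a))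
    (hC' : ∃ b, i < b ∧ ¬ csupp c X C' ⊆ ↑(X b)) : C = C' := by
  obtain ⟨a, hia, hCa⟩ := hC
  obtain ⟨b, hib, hC'b⟩ := hC'
  by_contra hne
  have h1 := cross_ineq c X hc (hXN i) (hXN a) (hXN b) hia.ne hib.ne
    (hmono hia.le) (hmono hib.le) hne hCa hC'b
  have h2 := cross_ineq c X hc (hXN i) (hXN b) (hXN a) hib.ne hia.ne
    (hmono hib.le) (hmono hia.le) (Ne.symm hne) hC'b hCa
  omega

/-- The kernel count: at least `|X i| + p + 1` odd components of `G_i - X_i` are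
contained in every later `X a`. -/
lemma kernel_count (hc : ∀ x y, c x y = c y x) {p : ℕ}
    (hXN : ∀ i, (X i).card + p + 2 ≤ oddN c X i)
    (hmono : Monotone fun i => (X i).card) (i : Fin t) :
    (X i).card + p + 1 ≤ Nat.card {C : (Hg c X i).ConnectedComponent //
      Odd (Nat.card C.supp) ∧ ∀ a, i < a → csupp c X C ⊆ ↑(X a)} := by
  have h := aux_addone (J := (Hg c X i).ConnectedComponent)
    (fun C => Odd (Nat.card C.supp)) (fun C => ∀ a, i < a → csupp c X C ⊆ ↑(X a)) ?_
  · have := hXN i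
    unfold oddN at this
    omega
  · intro x y hx hPx hy hPy
    have hPx2 : ¬ ∀ a, i < a → csupp c X x ⊆ ↑(X a) := hPx
    have hPy2 : ¬ ∀ a, i < a → csupp c X y ⊆ ↑(X a) := hPy
    push_neg at hPx2 hPy2
    obtain ⟨a, hia, ha⟩ := hPx2
    obtain ⟨b, hib, hb⟩ := hPy2
    exact escape_global c X hc hXN hmono ⟨a, hia, ha⟩ ⟨b, hib, hb⟩


/-- Main inequality: `∑_{i<j} |X i| + j (p+1) ≤ |X j|`. -/
lemma main_one (hc : ∀ x y, c x y = c y x) {p : ℕ}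
    (hXN : ∀ i, (X i).card + p + 2 ≤ oddN c X i)
    (hmono : Monotone fun i => (X i).card) (j : Fin t) :
    (∑ i ∈ Finset.univ.filter (· < j), (X i).card) + j.val * (p + 1) ≤ (X j).card := by
  classical
  let S : {i : Fin t // i < j} → Type _ := fun i =>
    {C : (Hg c X i.1).ConnectedComponent //
      Odd (Nat.card C.supp) ∧ ∀ a, i.1 < a → csupp c X C ⊆ ↑(X a)}
  have hdisj : ∀ (x y : (i : {i : Fin t // i < j}) × S i) (q : Fin n),
      q ∈ csupp c X x.2.1 → q ∈ csupp c X y.2.1 → x = y := by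
    rintro ⟨⟨i1, hi1⟩, C1, hC1⟩ ⟨⟨i2, hi2⟩, C2, hC2⟩ q hq1 hq2
    rcases lt_trichotomy i1 i2 with h | h | h
    · exfalso
      exact csupp_notMem c X hq2 (hC1.2 i2 h hq1)
    · subst h
      obtain rfl : C1 = C2 := csupp_disjoint c X hq1 hq2
      rfl
    · exfalso
      exact csupp_notMem c X hq1 (hC2.2 i1 h hq2)
  have hTle : Nat.card ((i : {i : Fin t // i < j}) × S i) ≤ (X j).card := by
    have h := aux_count (↑(X j) : Set (Fin n))
      (fun x : (i : {i : Fin t // i < j}) × S i => csupp c X x.2.1)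
      (fun x => csupp_nonempty c X x.2.1)
      (fun x q hq => x.2.2.2 j x.1.2 hq) hdisj
    rwa [Set.ncard_coe_finset] at h
  letI F : ∀ i, Fintype (S i) := fun i => Fintype.ofFinite _
  have hsigma : Nat.card ((i : {i : Fin t // i < j}) × S i) =
      ∑ i : {i : Fin t // i < j}, Nat.card (S i) := by
    rw [Nat.card_eq_fintype_card, Fintype.card_sigma]
    simp [Nat.card_eq_fintype_card]
  have hlb : ∑ i : {i : Fin t // i < j}, ((X i.1).card + (p + 1)) ≤
      ∑ i : {i : Fin t // i < j}, Nat.card (S i) := by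
    refine Finset.sum_le_sum fun i _ => ?_
    have h := kernel_count c X hc hXN hmono i.1
    simp only [S]
    omega
  have hsum1 : ∑ i : {i : Fin t // i < j}, ((X i.1).card + (p + 1)) =
      (∑ i ∈ Finset.univ.filter (· < j), (X i).card) + j.val * (p + 1) := by
    rw [Finset.sum_add_distrib, Finset.sum_const, Finset.card_univ, smul_eq_mul]
    congr 1
    · exact (Finset.sum_subtype (Finset.univ.filter (· < j))
        (by simp) fun i => (X i).card).symm
    · congr 1
      rw [Fintype.card_subtype]
      have : Finset.univ.filter (· < j) = Finset.Iio j := by ext x; simp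
      rw [this, Fin.card_Iio]
  omega

end KernelAux

lemma geo_sum_aux (p m : ℕ) :
    (∑ k ∈ Finset.range m, (2 ^ k - 1) * (p + 1)) + m * (p + 1)
      = (2 ^ m - 1) * (p + 1) := by
  induction m with
  | zero => simp
  | succ m ih =>
    have hx : (2 ^ m - 1) + (2 ^ m - 1) + 1 = 2 ^ (m + 1) - 1 := by
      have h2 : 1 ≤ 2 ^ m := Nat.one_le_two_pow
      rw [pow_succ]
      omega
    rw [Finset.sum_range_succ, ← hx]
    have expand : ((2 ^ m - 1) + (2 ^ m - 1) + 1) * (p + 1)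
        = (2 ^ m - 1) * (p + 1) + (2 ^ m - 1) * (p + 1) + (p + 1) := by ring
    have hm1 : (m + 1) * (p + 1) = m * (p + 1) + (p + 1) := by ring
    rw [expand, hm1]
    linarith [ih]

lemma sum_filter_lt_eq {t : ℕ} (j : Fin t) (f : ℕ → ℕ) :
    ∑ i ∈ Finset.univ.filter (· < j), f (i : Fin t).val
      = ∑ k ∈ Finset.range j.val, f k := by
  rw [show Finset.univ.filter (· < j) = Finset.Iio j from by ext x; simp]
  have hmap : (Finset.Iio j).map Fin.valEmbedding = Finset.range j.val := by
    ext k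
    simp only [Finset.mem_map, Finset.mem_Iio, Finset.mem_range, Fin.valEmbedding_apply]
    constructor
    · rintro ⟨x, hx, rfl⟩
      exact hx
    · intro hk
      exact ⟨⟨k, hk.trans j.isLt⟩, by simpa [Fin.lt_def] using hk, rfl⟩
  rw [← hmap, Finset.sum_map]
  rfl

/-- Under the setup of the kernel argument (`K_n` `t`-colored by `c`, `G_i` the graph
of edges of color `≠ i`, `c_o(G_i - X_i) ≥ |X_i| + p + 2`, `|X_1| ≤ … ≤ |X_t|`):
for every `2 ≤ i ≤ t` one has `|X_i| ≥ |X_1| + … + |X_(i-1)| + (i-1)(p+1)`, and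
consequently `|X_i| ≥ (2^(i-1) - 1)(p+1)` for all `i`. -/
theorem stmt_12 (n t p : ℕ) (ht : 0 < t)
    (c : Fin n → Fin n → Fin t) (hc : ∀ x y, c x y = c y x)
    (X : Fin t → Finset (Fin n))
    (hX : ∀ i : Fin t, (X i).card + p + 2 ≤
      oddCompCount (SimpleGraph.fromRel fun x y => c x y ≠ i) (X i))
    (hmono : Monotone fun i => (X i).card) :
    (∀ i : Fin t, 1 ≤ i.val →
      (∑ j ∈ Finset.univ.filter (· < i), (X j).card) + i.val * (p + 1) ≤ (X i).card) ∧
    ∀ i : Fin t, (2 ^ i.val - 1) * (p + 1) ≤ (X i).card := by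
  have hXN : ∀ i, (X i).card + p + 2 ≤ oddN c X i := fun i => hX i
  have h1 : ∀ j : Fin t,
      (∑ i ∈ Finset.univ.filter (· < j), (X i).card) + j.val * (p + 1) ≤ (X j).card :=
    main_one c X hc hXN hmono
  refine ⟨fun i _ => h1 i, ?_⟩
  have key : ∀ m : ℕ, ∀ j : Fin t, j.val = m → (2 ^ m - 1) * (p + 1) ≤ (X j).card := by
    intro m
    induction m using Nat.strong_induction_on with
    | _ m IH =>
      intro j hj
      subst hj
      have hmain := h1 j
      have hsum : ∑ i ∈ Finset.univ.filter (· < j), ((2 ^ (i : Fin t).val - 1) * (p + 1))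
          ≤ ∑ i ∈ Finset.univ.filter (· < j), (X i).card := by
        refine Finset.sum_le_sum fun i hi => ?_
        have hij : i < j := (Finset.mem_filter.mp hi).2
        exact IH i.val hij i rfl
      have hre := sum_filter_lt_eq j (fun k => (2 ^ k - 1) * (p + 1))
      have hgeo := geo_sum_aux p j.val
      rw [hre] at hsum
      omega
  exact fun i => key i.val i rfl
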